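/- Let M_i(j) denote the span of monomials of weight exactly 2j in (A // E(i))_*. Then the map φ_i (defined by ζ_k^{2^ℓ} ↦ ζ_{k-1}^{2^ℓ} for k > 1 and ζ_1^{2^ℓ} ↦ 1, extended multiplicatively) restricts, for i > 0, to an F_2-linear isomorphism from M_i(j) onto N_{i-1}(⌊j/2⌋), the span of monomials of weight ≤ 2⌊j/2⌋ in (A // E(i-1))_*. -/
import Mathlib

def wt (e : ℕ →₀ ℕ) : ℕ := e.sum fun k i => i * 2 ^ k

noncomputable def phi (e : ℕ →₀ ℕ) : ℕ →₀ ℕ :=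
  Finsupp.comapDomain (· + 1) e ((add_left_injective 1).injOn)

lemma phi_apply (e : ℕ →₀ ℕ) (k : ℕ) : phi e k = e (k + 1) := rfl

lemma wt_eq_range (e : ℕ →₀ ℕ) (N : ℕ) (h : e.support ⊆ Finset.range N) :
    wt e = ∑ k ∈ Finset.range N, e k * 2 ^ k := by
  unfold wt
  exact Finsupp.sum_of_support_subset e h _ (fun k _ => by simp)

lemma wt_eq (e : ℕ →₀ ℕ) : wt e = e 0 + 2 * wt (phi e) := by
  classical
  obtain ⟨N, hN⟩ : ∃ N, e.support ⊆ Finset.range (N + 1) := by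
    refine ⟨(e.support.sup id), fun x hx => Finset.mem_range.2 ?_⟩
    exact Nat.lt_succ_of_le (Finset.le_sup (f := id) hx)
  have hN' : (phi e).support ⊆ Finset.range N := by
    intro x hx
    have : e (x + 1) ≠ 0 := by simpa [phi_apply] using Finsupp.mem_support_iff.1 hx
    have := hN (Finsupp.mem_support_iff.2 this)
    simp only [Finset.mem_range] at this ⊢
    omega
  rw [wt_eq_range e (N + 1) hN, wt_eq_range (phi e) N hN', Finset.sum_range_succ']
  simp only [phi_apply, pow_succ, pow_zero, mul_one, Finset.mul_sum]
  rw [add_comm]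
  congr 1
  exact Finset.sum_congr rfl fun x _ => by ring
/-- For `i ≥ 1`, `φ_i` restricts to a bijection from the set `M_i(j)` of monomials of
`(A // E(i))_*` (exponents of `ζ_1, …, ζ_{i+1}` even) of weight exactly `2j` onto the set
`N_{i-1}(⌊j/2⌋)` of monomials of `(A // E(i-1))_*` of weight at most `2⌊j/2⌋`; hence an
`F_2`-linear isomorphism `M_i(j) ≅ N_{i-1}(⌊j/2⌋)`. -/
theorem stmt14 (i j : ℕ) (hi : 1 ≤ i) :
    Set.BijOn phi
      {e : ℕ →₀ ℕ | (∀ k ≤ i, e k % 2 = 0) ∧ wt e = 2 * j}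
      {e : ℕ →₀ ℕ | (∀ k ≤ i - 1, e k % 2 = 0) ∧ wt e ≤ 2 * (j / 2)} := by
  refine ⟨?_, ?_, ?_⟩
  · rintro e ⟨heven, hwt⟩
    refine ⟨fun k hk => ?_, ?_⟩
    · rw [phi_apply]
      exact heven (k + 1) (by omega)
    · have h1 := wt_eq e
      have h2 := wt_eq (phi e)
      have he0 := heven 0 (by omega)
      have he1 := heven 1 hi
      rw [phi_apply] at h2
      simp only [zero_add] at h2
      omega
  · rintro e1 ⟨h1e, h1w⟩ e2 ⟨h2e, h2w⟩ hphi
    have hw1 := wt_eq e1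
    have hw2 := wt_eq e2
    have hww : wt (phi e1) = wt (phi e2) := by rw [hphi]
    ext k
    cases k with
    | zero => omega
    | succ n => rw [← phi_apply, ← phi_apply, hphi]
  · rintro f ⟨hfe, hfw⟩
    set e : ℕ →₀ ℕ :=
      Finsupp.single 0 (2 * j - 2 * wt f) + Finsupp.mapDomain (· + 1) f with he
    have h0 : e 0 = 2 * j - 2 * wt f := by
      rw [he, Finsupp.add_apply, Finsupp.single_apply]
      have : (Finsupp.mapDomain (· + 1) f) 0 = 0 := by
        apply Finsupp.mapDomain_notin_range
        rintro ⟨a, ha⟩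
        simp at ha
      simp [this]
    have hs : ∀ n : ℕ, e (n + 1) = f n := by
      intro n
      rw [he, Finsupp.add_apply, Finsupp.mapDomain_apply (add_left_injective 1),
        Finsupp.single_apply]
      simp
    have hphi : phi e = f := by
      ext k; rw [phi_apply, hs]
    refine ⟨e, ⟨fun k hk => ?_, ?_⟩, hphi⟩
    · cases k with
      | zero => rw [h0]; omega
      | succ n => rw [hs]; exact hfe n (by omega)
    · have hwe := wt_eq e
      rw [hphi, h0] at hwe
      omega
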